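/- If constraints C̃_I on a phase space are each of the form C̃_I = P_I + h_I where P_I are momenta conjugate to configuration variables T_I that do not appear in any h_J, and the system {C̃_I} is first class, then all Poisson brackets {C̃_I, C̃_J} vanish identically (the constraints mutually commute). -/

import Mathlib

/-- The phase space with canonical pairs `(T_I, P_I)` (`I = 1,…,n`) and `(q_α, p_α)`
(`α = 1,…,m`). -/
abbrev PhaseSpace (n m : ℕ) :=
  (Fin n → ℝ) × (Fin n → ℝ) × (Fin m → ℝ) × (Fin m → ℝ)

/-- The canonical Poisson bracket
`{F,G} = Σ_I (∂F/∂T_I ∂G/∂P_I − ∂F/∂P_I ∂G/∂T_I) + Σ_α (∂F/∂q_α ∂G/∂p_α − ∂F/∂p_α ∂G/∂q_α)`. -/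
noncomputable def poissonBracket {n m : ℕ} (F G : PhaseSpace n m → ℝ)
    (z : PhaseSpace n m) : ℝ :=
  (∑ I : Fin n,
      (fderiv ℝ F z (Pi.single I 1, 0, 0, 0) * fderiv ℝ G z (0, Pi.single I 1, 0, 0)
        - fderiv ℝ F z (0, Pi.single I 1, 0, 0) * fderiv ℝ G z (Pi.single I 1, 0, 0, 0)))
    + ∑ α : Fin m,
      (fderiv ℝ F z (0, 0, Pi.single α 1, 0) * fderiv ℝ G z (0, 0, 0, Pi.single α 1)
        - fderiv ℝ F z (0, 0, 0, Pi.single α 1) * fderiv ℝ G z (0, 0, Pi.single α 1, 0))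

/-- The deparametrized constraint `C̃_I = P_I + h_I(q,p)`. -/
def deparamConstraint {n m : ℕ} (h : Fin n → (Fin m → ℝ) × (Fin m → ℝ) → ℝ)
    (I : Fin n) (z : PhaseSpace n m) : ℝ :=
  z.2.1 I + h I z.2.2

/-!
Translating a point by a vector `v` with no `(q, p)`-component shifts each constraint
`C̃_K = P_K + h_K(q, p)` by the constant `v_{P_K}`, so it leaves all derivatives of the
constraints, and hence their brackets, unchanged. Every point `z` can be translated in this way
onto the constraint surface (take `v_{P_K} = -C̃_K(z)`), where the first-class relation forces
the bracket to vanish.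
-/

theorem fderiv_add_eq_of_add_eq_add_const {𝕜 E F : Type*} [NontriviallyNormedField 𝕜]
    [NormedAddCommGroup E] [NormedSpace 𝕜 E] [NormedAddCommGroup F] [NormedSpace 𝕜 F]
    {f : E → F} {v : E} {c : F} (hf : ∀ x, f (x + v) = f x + c) (x : E) :
    fderiv 𝕜 f (x + v) = fderiv 𝕜 f x := by
  rw [← fderiv_comp_add_right, funext hf, fderiv_add_const]

theorem poissonBracket_add_of_fderiv_eq {n m : ℕ} {F G : PhaseSpace n m → ℝ}
    {z v : PhaseSpace n m} (hF : fderiv ℝ F (z + v) = fderiv ℝ F z)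
    (hG : fderiv ℝ G (z + v) = fderiv ℝ G z) :
    poissonBracket F G (z + v) = poissonBracket F G z := by
  simp only [poissonBracket, hF, hG]

section

variable {n m : ℕ} (h : Fin n → (Fin m → ℝ) × (Fin m → ℝ) → ℝ) {v : PhaseSpace n m}

theorem deparamConstraint_add (hv : v.2.2 = 0) (I : Fin n) (z : PhaseSpace n m) :
    deparamConstraint h I (z + v) = deparamConstraint h I z + v.2.1 I := by
  simp only [deparamConstraint, Prod.snd_add, Prod.fst_add, Pi.add_apply, hv, add_zero]
  ring

theorem poissonBracket_deparamConstraint_add (hv : v.2.2 = 0) (I J : Fin n)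
    (z : PhaseSpace n m) :
    poissonBracket (deparamConstraint h I) (deparamConstraint h J) (z + v)
      = poissonBracket (deparamConstraint h I) (deparamConstraint h J) z :=
  poissonBracket_add_of_fderiv_eq
    (fderiv_add_eq_of_add_eq_add_const (deparamConstraint_add h hv I) z)
    (fderiv_add_eq_of_add_eq_add_const (deparamConstraint_add h hv J) z)

end

theorem deparametrized_constraints_commute_general
    {n m : ℕ} (h : Fin n → (Fin m → ℝ) × (Fin m → ℝ) → ℝ)
    (f : Fin n → Fin n → Fin n → PhaseSpace n m → ℝ)
    (hfc : ∀ (I J : Fin n) (z : PhaseSpace n m),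
      poissonBracket (deparamConstraint h I) (deparamConstraint h J) z
        = ∑ K : Fin n, f I J K z * deparamConstraint h K z) :
    ∀ (I J : Fin n) (z : PhaseSpace n m),
      poissonBracket (deparamConstraint h I) (deparamConstraint h J) z = 0 := by
  intro I J z
  set v : PhaseSpace n m := (0, fun K => -deparamConstraint h K z, 0, 0)
  have hv : v.2.2 = 0 := rfl
  have on_surface : ∀ K, deparamConstraint h K (z + v) = 0 := fun K => by
    rw [deparamConstraint_add h hv]
    simp [v]
  rw [← poissonBracket_deparamConstraint_add h hv, hfc]
  simp [on_surface]

/-- If the constraints `C̃_I = P_I + h_I` are linear in the momenta `P_I`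
conjugate to configuration variables `T_I` that do not appear in any `h_J` (each `h_J`
depends only on `(q,p)`), and the system `{C̃_I}` is first class, i.e.
`{C̃_I, C̃_J} = Σ_K f_{IJ}^K C̃_K`, then all Poisson brackets `{C̃_I, C̃_J}` vanish
identically: the constraints mutually commute. -/
theorem deparametrized_constraints_commute
    {n m : ℕ} (h : Fin n → (Fin m → ℝ) × (Fin m → ℝ) → ℝ)
    (hdiff : ∀ I, Differentiable ℝ (h I))
    (f : Fin n → Fin n → Fin n → PhaseSpace n m → ℝ)
    (hfc : ∀ (I J : Fin n) (z : PhaseSpace n m),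
      poissonBracket (deparamConstraint h I) (deparamConstraint h J) z
        = ∑ K : Fin n, f I J K z * deparamConstraint h K z) :
    ∀ (I J : Fin n) (z : PhaseSpace n m),
      poissonBracket (deparamConstraint h I) (deparamConstraint h J) z = 0 :=
  deparametrized_constraints_commute_general h f hfc
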